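/- For n ≥ 0, the following identities hold in ℤ[s,t]: Σ_{p ∈ S_n} (1+s)^{des(p)} (1+t)^{des(p^{-1})} = Σ_{(u,v) ∈ Bur[n]} s^{n − max(u)} t^{n − max(v)}, and Σ_{p ∈ S_n} (1+s)^{des(p)} (1+t)^{asc(p^{-1})} = Σ_{(u,v) ∈ BBur[n]} s^{n − max(u)} t^{n − max(v)}. In other words, the two-sided Eulerian polynomial A_n(s,t) = Σ_{p ∈ S_n} s^{des(p)} t^{des(p^{-1})} satisfies A_n(1+s,1+t) = B_n(s,t), and its strict variant A∘_n(s,t) = Σ_{p ∈ S_n} s^{des(p)} t^{asc(p^{-1})} satisfies A∘_n(1+s,1+t) = B∘_n(s,t). -/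

import Mathlib

/-!
Expanding `(1 + s) ^ des p * (1 + t) ^ des p⁻¹` turns the left-hand side into a sum of
`s ^ |S| * t ^ |T|` over triples `(p, S, T)` with `S ⊆ Des p` and `T ⊆ Des p⁻¹`. Merging the
values `m` and `m + 1` of `p` for every `m ∈ T` (the map `collapse T`) gives a Cayley permutation
`v` with `max v = n - |T|`. Because `T ⊆ Des p⁻¹`, tied letters of `v` come from entries of `p`
that decrease from left to right, so `p` is the standardization of `v` that breaks ties from
right to left, and `Des v = Des p`. Likewise `collapse S` is the weakly increasing word with
descent set `S`, and `(p, S, T) ↦ (collapse S, collapse T ∘ p)` is a bijection onto `Bur[n]`.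
For `T ⊆ Asc p⁻¹` ties are broken from left to right and `Des∘ v = Des p` instead; both cases are
one argument, parametrized by the order `ρ` in which tied positions are compared.
-/

namespace CayPaper

/-- A word of length `n` (1-indexed): it vanishes outside `{1,…,n}`. -/
def IsWord (n : ℕ) (v : ℕ → ℕ) : Prop := ∀ i, i ∉ Set.Icc 1 n → v i = 0

/-- A Cayley permutation of length `n`: a word on `{1,…,n}` whose image is `{1,…,k}`
for some `k ≤ n`. -/
def IsCayley (n : ℕ) (v : ℕ → ℕ) : Prop :=
  IsWord n v ∧ ∃ k, v '' Set.Icc 1 n = Set.Icc 1 k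

/-- A weakly increasing Cayley permutation of length `n`. -/
def IsWI (n : ℕ) (v : ℕ → ℕ) : Prop :=
  IsCayley n v ∧ MonotoneOn v (Set.Icc 1 n)

/-- A permutation of `{1,…,n}`, encoded as a word. -/
def IsPermWord (n : ℕ) (v : ℕ → ℕ) : Prop :=
  IsWord n v ∧ Set.BijOn v (Set.Icc 1 n) (Set.Icc 1 n)

/-- The weak descent set `Des(v) = { i ∈ {1,…,n−1} : v(i) ≥ v(i+1) }`. -/
def desSet (n : ℕ) (v : ℕ → ℕ) : Finset ℕ :=
  (Finset.Icc 1 (n - 1)).filter fun i => v (i + 1) ≤ v i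

/-- The strict descent set `Des∘(v) = { i : v(i) > v(i+1) }`. -/
def sdesSet (n : ℕ) (v : ℕ → ℕ) : Finset ℕ :=
  (Finset.Icc 1 (n - 1)).filter fun i => v (i + 1) < v i

/-- The weak ascent set `Asc(v) = { i : v(i) ≤ v(i+1) }`. -/
def ascSet (n : ℕ) (v : ℕ → ℕ) : Finset ℕ :=
  (Finset.Icc 1 (n - 1)).filter fun i => v i ≤ v (i + 1)

/-- The strict ascent set `Asc∘(v) = { i : v(i) < v(i+1) }`. -/
def sascSet (n : ℕ) (v : ℕ → ℕ) : Finset ℕ :=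
  (Finset.Icc 1 (n - 1)).filter fun i => v i < v (i + 1)

def des (n : ℕ) (v : ℕ → ℕ) : ℕ := (desSet n v).card
def sdes (n : ℕ) (v : ℕ → ℕ) : ℕ := (sdesSet n v).card
def asc (n : ℕ) (v : ℕ → ℕ) : ℕ := (ascSet n v).card
def sasc (n : ℕ) (v : ℕ → ℕ) : ℕ := (sascSet n v).card

/-- The maximum value of a word. -/
def wmax (n : ℕ) (v : ℕ → ℕ) : ℕ := (Finset.Icc 1 n).sup v

/-- Reverse: `v^r(i) = v(n+1−i)`. -/
def wrev (n : ℕ) (v : ℕ → ℕ) : ℕ → ℕ := fun i =>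
  if 1 ≤ i ∧ i ≤ n then v (n + 1 - i) else 0

/-- Complement: `v^c(i) = max(v)+1−v(i)`. -/
def wcomp (n : ℕ) (v : ℕ → ℕ) : ℕ → ℕ := fun i =>
  if 1 ≤ i ∧ i ≤ n then wmax n v + 1 - v i else 0

/-- The word `(σ(1), …, σ(n))` (1-indexed) of a permutation `σ` of `Fin n`. -/
def permWord (n : ℕ) (σ : Equiv.Perm (Fin n)) : ℕ → ℕ := fun i =>
  if h : 1 ≤ i ∧ i ≤ n then ((σ ⟨i - 1, by omega⟩ : Fin n) : ℕ) + 1 else 0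

/-- The conjugate of `u`: the unique weakly increasing Cayley permutation of
length `n` whose descent set is `{1,…,n−1} \ Des(u)`. -/
noncomputable def conjWI (n : ℕ) (u : ℕ → ℕ) : ℕ → ℕ :=
  haveI := Classical.dec (∃ w, IsWI n w ∧ desSet n w = Finset.Icc 1 (n - 1) \ desSet n u)
  if h : ∃ w, IsWI n w ∧ desSet n w = Finset.Icc 1 (n - 1) \ desSet n u
    then h.choose else fun _ => 0

/-- A Burge matrix: every row and every column contains a nonzero entry. -/
def IsBurge {p q : ℕ} (M : Matrix (Fin p) (Fin q) ℕ) : Prop :=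
  (∀ i, ∃ j, M i j ≠ 0) ∧ (∀ j, ∃ i, M i j ≠ 0)

/-- The size of a matrix with natural entries: the sum of its entries. -/
def matSize {p q : ℕ} (M : Matrix (Fin p) (Fin q) ℕ) : ℕ := ∑ i, ∑ j, M i j

/-- Burge matrices of size `n` (of all dimensions). -/
def BurgeMatrices (n : ℕ) : Set (Σ p : ℕ, Σ q : ℕ, Matrix (Fin p) (Fin q) ℕ) :=
  {M | IsBurge M.2.2 ∧ matSize M.2.2 = n}

/-- Binary Burge matrices of size `n`. -/
def BinaryBurgeMatrices (n : ℕ) : Set (Σ p : ℕ, Σ q : ℕ, Matrix (Fin p) (Fin q) ℕ) :=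
  {M | M ∈ BurgeMatrices n ∧ ∀ i j, M.2.2 i j ≤ 1}

/-- Burge matrices of size `n` whose every column sums to `1`. -/
def ColSumOneBurgeMatrices (n : ℕ) : Set (Σ p : ℕ, Σ q : ℕ, Matrix (Fin p) (Fin q) ℕ) :=
  {M | M ∈ BurgeMatrices n ∧ ∀ j, ∑ i, M.2.2 i j = 1}

/-- Burge words: pairs `(u,v) ∈ WI[n] × Cay[n]` with `Des(u) ⊆ Des(v)`. -/
def BurPairs (n : ℕ) : Set ((ℕ → ℕ) × (ℕ → ℕ)) :=
  {p | IsWI n p.1 ∧ IsCayley n p.2 ∧ desSet n p.1 ⊆ desSet n p.2}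

/-- Pairs `(u,v) ∈ WI[n] × Cay[n]` with `Des(u) ⊆ Des∘(v)`. -/
def BBurPairs (n : ℕ) : Set ((ℕ → ℕ) × (ℕ → ℕ)) :=
  {p | IsWI n p.1 ∧ IsCayley n p.2 ∧ desSet n p.1 ⊆ sdesSet n p.2}

/-- Pairs `(u,v) ∈ WI[n] × S_n` with `Des(u) ⊆ Des(v)`. -/
def PBurPairs (n : ℕ) : Set ((ℕ → ℕ) × (ℕ → ℕ)) :=
  {p | IsWI n p.1 ∧ IsPermWord n p.2 ∧ desSet n p.1 ⊆ desSet n p.2}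

/-- `Ω[n]`: pairs `(u,v) ∈ WI[n] × Cay[n]` with `Des(u) ⊇ Des(v)`. -/
def OmegaPairs (n : ℕ) : Set ((ℕ → ℕ) × (ℕ → ℕ)) :=
  {p | IsWI n p.1 ∧ IsCayley n p.2 ∧ desSet n p.2 ⊆ desSet n p.1}

/-- `v` lists the positions `1,…,n` in the order obtained by sorting the columns
`(x_i, i)` so that first components are weakly increasing, ties broken by strictly
decreasing second components.  For a permutation word `v` this says exactly that
`v = Γ(id, x)`, the bottom row of the Burge transpose of `(id, x)`. -/
def sortsColumns (n : ℕ) (x v : ℕ → ℕ) : Prop :=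
  ∀ i ∈ Finset.Icc 1 (n - 1),
    x (v i) < x (v (i + 1)) ∨ (x (v i) = x (v (i + 1)) ∧ v (i + 1) < v i)

/-- The Fishburn basis of a permutation word `v`:
`basis(v) = { x ∈ Cay[n] : Γ(id, x) = v }`. -/
def fishburnBasis (n : ℕ) (v : ℕ → ℕ) : Set (ℕ → ℕ) :=
  {x | IsCayley n x ∧ sortsColumns n x v}

/-- Stanley's `v`-compatibility condition:
`x(v(1)) ≤ ⋯ ≤ x(v(n))` with strict inequality at every ascent of `v`. -/
def VCompatible (n : ℕ) (v x : ℕ → ℕ) : Prop :=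
  (∀ i ∈ Finset.Icc 1 (n - 1), x (v i) ≤ x (v (i + 1))) ∧
    ∀ i ∈ Finset.Icc 1 (n - 1), v i < v (i + 1) → x (v i) < x (v (i + 1))

/-- A map `{1,…,n} → {1,…,m}`, encoded as a word. -/
def IsMapTo (n m : ℕ) (x : ℕ → ℕ) : Prop :=
  IsWord n x ∧ ∀ i ∈ Set.Icc 1 n, x i ∈ Set.Icc 1 m

/-- Weakly increasing maps `{1,…,n} → {1,…,m}`. -/
def WIgen (n m : ℕ) : Set (ℕ → ℕ) :=
  {u | IsMapTo n m u ∧ MonotoneOn u (Set.Icc 1 n)}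

open Finset

def collapse (T : Finset ℕ) (m : ℕ) : ℕ := m - #(T ∩ Ico 1 m)

theorem collapse_zero (T : Finset ℕ) : collapse T 0 = 0 := by simp [collapse]

theorem collapse_one (T : Finset ℕ) : collapse T 1 = 1 := by simp [collapse]

theorem collapse_succ (T : Finset ℕ) {m : ℕ} (hm : 1 ≤ m) :
    collapse T (m + 1) = if m ∈ T then collapse T m else collapse T m + 1 := by
  have hcard : #(T ∩ Ico 1 m) ≤ m - 1 := (card_le_card inter_subset_right).trans (by simp)
  have hm' : m ∉ T ∩ Ico 1 m := by simp
  unfold collapse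
  rw [Nat.Ico_succ_right_eq_insert_Ico hm]
  split_ifs with h
  · rw [inter_insert_of_mem h, card_insert_of_notMem hm']; omega
  · rw [inter_insert_of_notMem h]; omega

theorem collapse_succ_le (T : Finset ℕ) (m : ℕ) : collapse T (m + 1) ≤ collapse T m + 1 := by
  rcases Nat.eq_zero_or_pos m with rfl | hm
  · simp [collapse_zero, collapse_one]
  · rw [collapse_succ T hm]; split_ifs <;> omega

theorem collapse_mono (T : Finset ℕ) : Monotone (collapse T) := by
  refine monotone_nat_of_le_succ fun m => ?_
  rcases Nat.eq_zero_or_pos m with rfl | hm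
  · simp [collapse_zero, collapse_one]
  · rw [collapse_succ T hm]; split_ifs <;> omega

theorem collapse_succ_eq_iff (T : Finset ℕ) {m : ℕ} (hm : 1 ≤ m) :
    collapse T (m + 1) = collapse T m ↔ m ∈ T := by
  rw [collapse_succ T hm]; split_ifs with h <;> simp [h]

theorem mem_of_collapse_eq {T : Finset ℕ} {a b k : ℕ} (ha : 1 ≤ a) (hak : a ≤ k) (hkb : k < b)
    (h : collapse T a = collapse T b) : k ∈ T := by
  rw [← collapse_succ_eq_iff T (ha.trans hak)]
  have h1 : collapse T a ≤ collapse T k := collapse_mono T hak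
  have h2 : collapse T (k + 1) ≤ collapse T b := collapse_mono T hkb
  have h3 : collapse T k ≤ collapse T (k + 1) := collapse_mono T k.le_succ
  omega

theorem collapse_eq_sub_card {T : Finset ℕ} {n : ℕ} (hT : T ⊆ Icc 1 (n - 1)) :
    collapse T n = n - #T := by
  have : T ∩ Ico 1 n = T := inter_eq_left.mpr fun x hx => by
    have := mem_Icc.mp (hT hx); rw [mem_Ico]; omega
  rw [collapse, this]

theorem exists_collapse_eq (T : Finset ℕ) {c m : ℕ} (hc : 1 ≤ c) (h : c ≤ collapse T m) :
    ∃ a ∈ Set.Icc 1 m, collapse T a = c := by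
  induction m with
  | zero => rw [collapse_zero] at h; omega
  | succ m ih =>
    by_cases hcm : c ≤ collapse T m
    · obtain ⟨a, ha, rfl⟩ := ih hcm
      exact ⟨a, ⟨ha.1, ha.2.trans m.le_succ⟩, rfl⟩
    · exact ⟨m + 1, ⟨by omega, le_rfl⟩, by have := collapse_succ_le T m; omega⟩

theorem image_collapse {T : Finset ℕ} {n : ℕ} (hT : T ⊆ Icc 1 (n - 1)) :
    collapse T '' Set.Icc 1 n = Set.Icc 1 (n - #T) := by
  ext c
  constructor
  · rintro ⟨a, ha, rfl⟩
    rw [← collapse_eq_sub_card hT, ← collapse_one T]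
    exact ⟨collapse_mono T ha.1, collapse_mono T ha.2⟩
  · rintro ⟨hc, hcn⟩
    rw [← collapse_eq_sub_card hT] at hcn
    exact exists_collapse_eq T hc hcn

theorem permWord_succ {n : ℕ} (σ : Equiv.Perm (Fin n)) (j : Fin n) :
    permWord n σ (j + 1) = σ j + 1 := by
  rw [permWord, dif_pos ⟨by omega, j.isLt⟩]
  rfl

theorem permWord_of_notMem {n i : ℕ} (σ : Equiv.Perm (Fin n)) (hi : i ∉ Set.Icc 1 n) :
    permWord n σ i = 0 :=
  dif_neg hi

theorem permWord_zero {n : ℕ} (σ : Equiv.Perm (Fin n)) : permWord n σ 0 = 0 :=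
  permWord_of_notMem σ (by simp)

theorem forall_mem_Icc_one_iff {n : ℕ} {P : ℕ → Prop} :
    (∀ i ∈ Set.Icc 1 n, P i) ↔ ∀ j : Fin n, P (j + 1) := by
  refine ⟨fun h j => h _ ⟨by omega, j.isLt⟩, fun h i hi => ?_⟩
  rw [Set.mem_Icc] at hi
  have := h ⟨i - 1, by omega⟩
  rwa [show i - 1 + 1 = i by omega] at this

theorem permWord_mem_Icc {n i : ℕ} (σ : Equiv.Perm (Fin n)) (hi : i ∈ Set.Icc 1 n) :
    permWord n σ i ∈ Set.Icc 1 n := by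
  revert i
  rw [forall_mem_Icc_one_iff]
  intro j
  rw [permWord_succ]
  exact ⟨by omega, (σ j).isLt⟩

theorem permWord_inv_permWord {n i : ℕ} (σ : Equiv.Perm (Fin n)) (hi : i ∈ Set.Icc 1 n) :
    permWord n σ⁻¹ (permWord n σ i) = i := by
  revert i
  rw [forall_mem_Icc_one_iff]
  intro j
  simp [permWord_succ]

theorem permWord_permWord_inv {n i : ℕ} (σ : Equiv.Perm (Fin n)) (hi : i ∈ Set.Icc 1 n) :
    permWord n σ (permWord n σ⁻¹ i) = i := by
  simpa using permWord_inv_permWord σ⁻¹ hi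

theorem bijOn_permWord {n : ℕ} (σ : Equiv.Perm (Fin n)) :
    Set.BijOn (permWord n σ) (Set.Icc 1 n) (Set.Icc 1 n) :=
  Set.InvOn.bijOn ⟨fun _ => permWord_inv_permWord σ, fun _ => permWord_permWord_inv σ⟩
    (fun _ => permWord_mem_Icc σ) (fun _ => permWord_mem_Icc σ⁻¹)

theorem permWord_one_apply {n i : ℕ} (hi : i ∈ Set.Icc 1 n) : permWord n 1 i = i := by
  revert i
  rw [forall_mem_Icc_one_iff]
  intro j
  rw [permWord_succ]
  rfl

theorem permWord_lt_permWord_iff {n : ℕ} (σ : Equiv.Perm (Fin n)) (i j : Fin n) :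
    permWord n σ (j + 1) < permWord n σ (i + 1) ↔ σ j < σ i := by
  rw [permWord_succ, permWord_succ, Fin.lt_def]
  omega

theorem desSet_eq_sdesSet_of_injOn {n : ℕ} {v : ℕ → ℕ} (hv : Set.InjOn v (Set.Icc 1 n)) :
    desSet n v = sdesSet n v := by
  refine filter_congr fun i hi => ?_
  have hi := mem_Icc.mp hi
  have hne : v (i + 1) ≠ v i := fun h => by
    have := hv ⟨by omega, by omega⟩ ⟨hi.1, by omega⟩ h; omega
  exact ⟨fun h => lt_of_le_of_ne h hne, le_of_lt⟩

theorem ascSet_eq_sascSet_of_injOn {n : ℕ} {v : ℕ → ℕ} (hv : Set.InjOn v (Set.Icc 1 n)) :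
    ascSet n v = sascSet n v := by
  refine filter_congr fun i hi => ?_
  have hi := mem_Icc.mp hi
  have hne : v i ≠ v (i + 1) := fun h => by
    have := hv ⟨hi.1, by omega⟩ ⟨by omega, by omega⟩ h; omega
  exact ⟨fun h => lt_of_le_of_ne h hne, le_of_lt⟩

theorem desSet_permWord {n : ℕ} (σ : Equiv.Perm (Fin n)) :
    desSet n (permWord n σ) = sdesSet n (permWord n σ) :=
  desSet_eq_sdesSet_of_injOn (bijOn_permWord σ).injOn

theorem ascSet_permWord {n : ℕ} (σ : Equiv.Perm (Fin n)) :
    ascSet n (permWord n σ) = sascSet n (permWord n σ) :=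
  ascSet_eq_sascSet_of_injOn (bijOn_permWord σ).injOn

theorem exists_permWord_lt_iff {α : Type*} [LinearOrder α] {n : ℕ} {key : ℕ → α}
    (hkey : Set.InjOn key (Set.Icc 1 n)) :
    ∃ σ : Equiv.Perm (Fin n), ∀ i ∈ Set.Icc 1 n, ∀ j ∈ Set.Icc 1 n,
      permWord n σ j < permWord n σ i ↔ key j < key i := by
  set f : Fin n → α := fun j => key (j + 1)
  have hf : Function.Injective f := fun a b h => Fin.ext <| by
    have := hkey ⟨by omega, a.isLt⟩ ⟨by omega, b.isLt⟩ h; omega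
  have hsort : StrictMono (f ∘ Tuple.sort f) :=
    (Tuple.monotone_sort f).strictMono_of_injective (hf.comp (Tuple.sort f).injective)
  refine ⟨(Tuple.sort f)⁻¹, ?_⟩
  simp only [forall_mem_Icc_one_iff, permWord_lt_permWord_iff]
  intro i j
  rw [← hsort.lt_iff_lt]
  simp [f]

theorem eq_of_permWord_lt_iff {n : ℕ} {σ τ : Equiv.Perm (Fin n)}
    (h : ∀ i ∈ Set.Icc 1 n, ∀ j ∈ Set.Icc 1 n,
      permWord n σ j < permWord n σ i ↔ permWord n τ j < permWord n τ i) : σ = τ := by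
  simp only [forall_mem_Icc_one_iff, permWord_lt_permWord_iff] at h
  have hrank (π : Equiv.Perm (Fin n)) (i : Fin n) : #{j | π j < π i} = π i := by
    rw [← Fin.card_Iio, ← filter_gt_eq_Iio]
    exact card_equiv π (by simp)
  ext i
  rw [← hrank σ, ← hrank τ]
  simp only [h]

theorem wmax_eq_of_image {n k : ℕ} {v : ℕ → ℕ} (h : v '' Set.Icc 1 n = Set.Icc 1 k) :
    wmax n v = k := by
  refine le_antisymm (Finset.sup_le fun i hi => ?_) ?_
  · exact (h ▸ Set.mem_image_of_mem v (mem_Icc.mp hi) : v i ∈ Set.Icc 1 k).2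
  · rcases Nat.eq_zero_or_pos k with rfl | hk
    · exact Nat.zero_le _
    · have hk' : k ∈ v '' Set.Icc 1 n := h ▸ ⟨hk, le_rfl⟩
      obtain ⟨i, hi, hik⟩ := hk'
      exact hik ▸ le_sup (mem_Icc.mpr hi)

def collapsePerm (n : ℕ) (σ : Equiv.Perm (Fin n)) (T : Finset ℕ) : ℕ → ℕ :=
  collapse T ∘ permWord n σ

section collapsePerm

variable {n : ℕ} {σ : Equiv.Perm (Fin n)} {T : Finset ℕ}

theorem collapsePerm_of_notMem {i : ℕ} (hi : i ∉ Set.Icc 1 n) : collapsePerm n σ T i = 0 := by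
  simp [collapsePerm, permWord_of_notMem σ hi, collapse_zero]

theorem image_collapsePerm (hT : T ⊆ Icc 1 (n - 1)) :
    collapsePerm n σ T '' Set.Icc 1 n = Set.Icc 1 (n - #T) := by
  rw [collapsePerm, Set.image_comp, (bijOn_permWord σ).image_eq, image_collapse hT]

theorem isCayley_collapsePerm (hT : T ⊆ Icc 1 (n - 1)) : IsCayley n (collapsePerm n σ T) :=
  ⟨fun _ => collapsePerm_of_notMem, _, image_collapsePerm hT⟩

theorem sub_wmax_collapsePerm (hT : T ⊆ Icc 1 (n - 1)) :
    n - wmax n (collapsePerm n σ T) = #T := by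
  have : #T ≤ n - 1 := (card_le_card hT).trans (by simp)
  rw [wmax_eq_of_image (image_collapsePerm hT)]
  omega

theorem collapsePerm_comp_permWord_inv :
    collapsePerm n σ T ∘ permWord n σ⁻¹ = collapsePerm n 1 T := by
  funext m
  by_cases hm : m ∈ Set.Icc 1 n
  · simp [collapsePerm, permWord_permWord_inv σ hm, permWord_one_apply hm]
  · simp [collapsePerm, permWord_of_notMem _ hm, permWord_zero, collapse_zero]

end collapsePerm

section WI

variable {n : ℕ} {S : Finset ℕ}

theorem collapsePerm_one_apply {i : ℕ} (hi : i ∈ Set.Icc 1 n) :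
    collapsePerm n 1 S i = collapse S i := by
  simp [collapsePerm, permWord_one_apply hi]

theorem desSet_collapsePerm_one (hS : S ⊆ Icc 1 (n - 1)) : desSet n (collapsePerm n 1 S) = S := by
  ext i
  simp only [desSet, mem_filter]
  constructor
  · rintro ⟨hi, hle⟩
    have hi := mem_Icc.mp hi
    rw [collapsePerm_one_apply ⟨by omega, by omega⟩, collapsePerm_one_apply ⟨hi.1, by omega⟩] at hle
    exact (collapse_succ_eq_iff S hi.1).mp (le_antisymm hle (collapse_mono S i.le_succ))
  · intro hiS
    have hi := mem_Icc.mp (hS hiS)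
    refine ⟨hS hiS, ?_⟩
    rw [collapsePerm_one_apply ⟨by omega, by omega⟩, collapsePerm_one_apply ⟨hi.1, by omega⟩,
      (collapse_succ_eq_iff S hi.1).mpr hiS]

theorem isWI_collapsePerm_one (hS : S ⊆ Icc 1 (n - 1)) : IsWI n (collapsePerm n 1 S) :=
  ⟨isCayley_collapsePerm hS, fun i hi j hj hij => by
    rw [collapsePerm_one_apply hi, collapsePerm_one_apply hj]
    exact collapse_mono S hij⟩

theorem IsWI.apply_one {u : ℕ → ℕ} (hu : IsWI n u) (hn : 1 ≤ n) : u 1 = 1 := by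
  obtain ⟨⟨-, k, himg⟩, hmono⟩ := hu
  have h1 : u 1 ∈ Set.Icc 1 k := himg ▸ Set.mem_image_of_mem u ⟨le_rfl, hn⟩
  have h1' : 1 ∈ u '' Set.Icc 1 n := himg ▸ ⟨le_rfl, h1.1.trans h1.2⟩
  obtain ⟨l, hl, hul⟩ := h1'
  exact le_antisymm ((hmono ⟨le_rfl, hn⟩ hl hl.1).trans hul.le) h1.1

theorem IsWI.apply_succ_le {u : ℕ → ℕ} (hu : IsWI n u) {m : ℕ} (hm : 1 ≤ m) (hmn : m + 1 ≤ n) :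
    u (m + 1) ≤ u m + 1 := by
  obtain ⟨⟨-, k, himg⟩, hmono⟩ := hu
  have hm' : m ∈ Set.Icc 1 n := ⟨hm, by omega⟩
  have hm1 : m + 1 ∈ Set.Icc 1 n := ⟨by omega, hmn⟩
  by_contra! hgt
  have hk : u (m + 1) ∈ Set.Icc 1 k := himg ▸ Set.mem_image_of_mem u hm1
  have hc : u m + 1 ∈ u '' Set.Icc 1 n := himg ▸ ⟨by omega, by have := hk.2; omega⟩
  obtain ⟨l, hl, hlu⟩ := hc
  rcases le_or_gt l m with hlm | hlm
  · have := hmono hl hm' hlm; omega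
  · have := hmono hm1 hl hlm; omega

theorem collapsePerm_one_desSet {u : ℕ → ℕ} (hu : IsWI n u) :
    collapsePerm n 1 (desSet n u) = u := by
  have key : ∀ m, 1 ≤ m → m ≤ n → collapse (desSet n u) m = u m := by
    intro m hm
    induction m, hm using Nat.le_induction with
    | base => intro hn; rw [collapse_one, hu.apply_one hn]
    | succ m hm ih =>
      intro hmn
      have hle : u m ≤ u (m + 1) := hu.2 ⟨hm, by omega⟩ ⟨by omega, hmn⟩ m.le_succ
      have hgap := hu.apply_succ_le hm hmn
      have hdes : m ∈ desSet n u ↔ u (m + 1) ≤ u m := by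
        simp only [desSet, mem_filter, mem_Icc]; omega
      rw [collapse_succ _ hm, ih (by omega)]
      split_ifs with h
      · have := hdes.mp h; omega
      · have := mt hdes.mpr h; omega
  funext i
  by_cases hi : i ∈ Set.Icc 1 n
  · rw [collapsePerm_one_apply hi, key i hi.1 hi.2]
  · rw [collapsePerm_of_notMem hi, hu.1.1 i hi]

end WI

section TieBreak

variable {β : Type*} [LinearOrder β] (ρ : ℕ → β)

def lexDesSet (n : ℕ) (v : ℕ → ℕ) : Finset ℕ :=
  (Icc 1 (n - 1)).filter fun i => toLex (v (i + 1), ρ (i + 1)) < toLex (v i, ρ i)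

def ascSetBy (n : ℕ) (w : ℕ → ℕ) : Finset ℕ :=
  (Icc 1 (n - 1)).filter fun m => ρ (w m) < ρ (w (m + 1))

variable {ρ} {n : ℕ} {σ : Equiv.Perm (Fin n)} {T : Finset ℕ}

theorem lt_of_collapse_eq (hT : T ⊆ ascSetBy ρ n (permWord n σ⁻¹)) {a b : ℕ} (ha : 1 ≤ a)
    (hab : a < b) (h : collapse T a = collapse T b) :
    ρ (permWord n σ⁻¹ a) < ρ (permWord n σ⁻¹ b) := by
  have hstep : StrictMonoOn (ρ ∘ permWord n σ⁻¹) (Set.Icc a b) :=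
    strictMonoOn_of_lt_add_one Set.ordConnected_Icc fun k _ hk hk1 =>
      (mem_filter.mp (hT (mem_of_collapse_eq ha hk.1 (by have := hk1.2; omega) h))).2
  exact hstep ⟨le_rfl, hab.le⟩ ⟨hab.le, le_rfl⟩ hab

theorem permWord_lt_iff_toLex_lt (hT : T ⊆ ascSetBy ρ n (permWord n σ⁻¹)) {i j : ℕ}
    (hi : i ∈ Set.Icc 1 n) (hj : j ∈ Set.Icc 1 n) :
    permWord n σ j < permWord n σ i ↔
      toLex (collapsePerm n σ T j, ρ j) < toLex (collapsePerm n σ T i, ρ i) := by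
  have forward {i j : ℕ} (hi : i ∈ Set.Icc 1 n) (hj : j ∈ Set.Icc 1 n)
      (h : permWord n σ j < permWord n σ i) :
      toLex (collapsePerm n σ T j, ρ j) < toLex (collapsePerm n σ T i, ρ i) := by
    rw [Prod.Lex.toLex_lt_toLex]
    rcases (collapse_mono T h.le).lt_or_eq with hlt | heq
    · exact Or.inl hlt
    · refine Or.inr ⟨heq, ?_⟩
      have := lt_of_collapse_eq hT (permWord_mem_Icc σ hj).1 h heq
      rwa [permWord_inv_permWord σ hi, permWord_inv_permWord σ hj] at this
  refine ⟨forward hi hj, fun h => ?_⟩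
  rcases lt_trichotomy (permWord n σ j) (permWord n σ i) with hlt | heq | hgt
  · exact hlt
  · cases (bijOn_permWord σ).injOn hj hi heq
    exact absurd h (lt_irrefl _)
  · exact absurd (forward hj hi hgt) (lt_asymm h)

theorem lexDesSet_collapsePerm (hT : T ⊆ ascSetBy ρ n (permWord n σ⁻¹)) :
    lexDesSet ρ n (collapsePerm n σ T) = desSet n (permWord n σ) := by
  rw [desSet_permWord]
  refine filter_congr fun i hi => ?_
  have hi := mem_Icc.mp hi
  exact (permWord_lt_iff_toLex_lt hT ⟨hi.1, by omega⟩ ⟨by omega, by omega⟩).symm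

theorem collapsePerm_inj {σ' : Equiv.Perm (Fin n)} {T' : Finset ℕ}
    (hT : T ⊆ ascSetBy ρ n (permWord n σ⁻¹)) (hT' : T' ⊆ ascSetBy ρ n (permWord n σ'⁻¹))
    (h : collapsePerm n σ T = collapsePerm n σ' T') : σ = σ' ∧ T = T' := by
  have hσ : σ = σ' := eq_of_permWord_lt_iff fun i hi j hj => by
    rw [permWord_lt_iff_toLex_lt hT hi hj, permWord_lt_iff_toLex_lt hT' hi hj, h]
  subst hσ
  have hsub {T : Finset ℕ} (hT : T ⊆ ascSetBy ρ n (permWord n σ⁻¹)) : T ⊆ Icc 1 (n - 1) :=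
    hT.trans (filter_subset _ _)
  refine ⟨rfl, ?_⟩
  rw [← desSet_collapsePerm_one (hsub hT), ← desSet_collapsePerm_one (hsub hT'),
    ← collapsePerm_comp_permWord_inv (σ := σ) (T := T),
    ← collapsePerm_comp_permWord_inv (σ := σ) (T := T'), h]

theorem strictMonoOn_toLex_comp_permWord_inv {v : ℕ → ℕ}
    (hσ : ∀ i ∈ Set.Icc 1 n, ∀ j ∈ Set.Icc 1 n,
      permWord n σ j < permWord n σ i ↔ toLex (v j, ρ j) < toLex (v i, ρ i)) :
    StrictMonoOn (fun m => toLex (v (permWord n σ⁻¹ m), ρ (permWord n σ⁻¹ m))) (Set.Icc 1 n) :=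
  fun a ha b hb hab => by
    have := (hσ _ (permWord_mem_Icc σ⁻¹ hb) _ (permWord_mem_Icc σ⁻¹ ha)).mp
    rw [permWord_permWord_inv σ ha, permWord_permWord_inv σ hb] at this
    exact this hab

theorem isWI_comp_permWord_inv {v : ℕ → ℕ} (hv : IsCayley n v)
    (hσ : ∀ i ∈ Set.Icc 1 n, ∀ j ∈ Set.Icc 1 n,
      permWord n σ j < permWord n σ i ↔ toLex (v j, ρ j) < toLex (v i, ρ i)) :
    IsWI n (v ∘ permWord n σ⁻¹) := by
  obtain ⟨hword, k, himg⟩ := hv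
  refine ⟨⟨fun m hm => ?_, k, ?_⟩, fun a ha b hb hab => ?_⟩
  · simp [permWord_of_notMem _ hm, hword 0 (by simp)]
  · rw [Set.image_comp, (bijOn_permWord σ⁻¹).image_eq, himg]
  · rcases hab.lt_or_eq with hab | rfl
    · rcases Prod.Lex.toLex_lt_toLex.mp (strictMonoOn_toLex_comp_permWord_inv hσ ha hb hab)
        with h | h
      exacts [h.le, h.1.le]
    · exact le_rfl

theorem exists_collapsePerm_eq (hρ : Function.Injective ρ) {v : ℕ → ℕ} (hv : IsCayley n v) :
    ∃ (σ : Equiv.Perm (Fin n)) (T : Finset ℕ),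
      T ⊆ ascSetBy ρ n (permWord n σ⁻¹) ∧ collapsePerm n σ T = v := by
  -- `σ` standardizes `v` along the lexicographic order of `(v i, ρ i)`; `v` sorted by `σ` is
  -- weakly increasing, and its descent set is the `T` sought.
  obtain ⟨σ, hσ⟩ := exists_permWord_lt_iff (n := n) (key := fun i => toLex (v i, ρ i))
    fun i _ j _ h => hρ (congrArg Prod.snd h)
  have hw := isWI_comp_permWord_inv hv hσ
  refine ⟨σ, desSet n (v ∘ permWord n σ⁻¹), fun m hm => ?_, funext fun i => ?_⟩
  · obtain ⟨hm, hle⟩ := mem_filter.mp hm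
    have hm := mem_Icc.mp hm
    refine mem_filter.mpr ⟨mem_Icc.mpr hm, ?_⟩
    rcases Prod.Lex.toLex_lt_toLex.mp (strictMonoOn_toLex_comp_permWord_inv hσ
      ⟨hm.1, by omega⟩ ⟨by omega, by omega⟩ m.lt_succ_self) with h | h
    exacts [absurd hle (not_le.mpr h), h.2]
  · by_cases hi : i ∈ Set.Icc 1 n
    · have := congrFun (collapsePerm_one_desSet hw) (permWord n σ i)
      rw [collapsePerm_one_apply (permWord_mem_Icc σ hi)] at this
      simp only [collapsePerm, Function.comp_apply, this, permWord_inv_permWord σ hi]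
    · rw [collapsePerm_of_notMem hi, hv.1 i hi]

end TieBreak

section Bijection

variable {β : Type*} [LinearOrder β] (ρ : ℕ → β) (n : ℕ)

def descentTriples : Finset (Σ _ : Equiv.Perm (Fin n), Finset ℕ × Finset ℕ) :=
  univ.sigma fun σ =>
    (desSet n (permWord n σ)).powerset ×ˢ (ascSetBy ρ n (permWord n σ⁻¹)).powerset

def lexBurPairs : Set ((ℕ → ℕ) × (ℕ → ℕ)) :=
  {p | IsWI n p.1 ∧ IsCayley n p.2 ∧ desSet n p.1 ⊆ lexDesSet ρ n p.2}

variable {ρ n}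

theorem mem_descentTriples {σ : Equiv.Perm (Fin n)} {S T : Finset ℕ} :
    ⟨σ, S, T⟩ ∈ descentTriples ρ n ↔
      S ⊆ desSet n (permWord n σ) ∧ T ⊆ ascSetBy ρ n (permWord n σ⁻¹) := by
  simp [descentTriples]

theorem subset_Icc_of_mem_descentTriples {σ : Equiv.Perm (Fin n)} {S T : Finset ℕ}
    (h : ⟨σ, S, T⟩ ∈ descentTriples ρ n) : S ⊆ Icc 1 (n - 1) ∧ T ⊆ Icc 1 (n - 1) :=
  ⟨(mem_descentTriples.mp h).1.trans (filter_subset _ _),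
    (mem_descentTriples.mp h).2.trans (filter_subset _ _)⟩

theorem bijOn_descentTriples (hρ : Function.Injective ρ) :
    Set.BijOn (fun x : Σ _ : Equiv.Perm (Fin n), Finset ℕ × Finset ℕ =>
      (collapsePerm n 1 x.2.1, collapsePerm n x.1 x.2.2))
      (descentTriples ρ n) (lexBurPairs ρ n) := by
  refine ⟨?_, ?_, ?_⟩
  · rintro ⟨σ, S, T⟩ hx
    obtain ⟨hS, hT⟩ := subset_Icc_of_mem_descentTriples hx
    refine ⟨isWI_collapsePerm_one hS, isCayley_collapsePerm hT, ?_⟩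
    rw [desSet_collapsePerm_one hS, lexDesSet_collapsePerm (mem_descentTriples.mp hx).2]
    exact (mem_descentTriples.mp hx).1
  · rintro ⟨σ, S, T⟩ hx ⟨σ', S', T'⟩ hx' h
    obtain ⟨hu, hv⟩ := Prod.ext_iff.mp h
    obtain ⟨rfl, rfl⟩ :=
      collapsePerm_inj (mem_descentTriples.mp hx).2 (mem_descentTriples.mp hx').2 hv
    have hS : S = S' := by
      rw [← desSet_collapsePerm_one (subset_Icc_of_mem_descentTriples hx).1,
        ← desSet_collapsePerm_one (subset_Icc_of_mem_descentTriples hx').1]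
      exact congrArg (desSet n) hu
    rw [hS]
  · rintro ⟨u, v⟩ ⟨hu, hv, hdes⟩
    obtain ⟨σ, T, hT, rfl⟩ := exists_collapsePerm_eq hρ hv
    refine ⟨⟨σ, desSet n u, T⟩, mem_descentTriples.mpr ⟨?_, hT⟩,
      Prod.ext (collapsePerm_one_desSet hu) rfl⟩
    rwa [← lexDesSet_collapsePerm hT]

theorem one_add_pow_card {R ι : Type*} [CommSemiring R] (x : R) (A : Finset ι) :
    (1 + x) ^ #A = ∑ B ∈ A.powerset, x ^ #B := by
  simpa [add_comm] using (sum_pow_mul_eq_add_pow x 1 A).symm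

theorem sum_one_add_pow_eq_finsum_lexBurPairs {R : Type*} [CommSemiring R]
    (hρ : Function.Injective ρ) (s t : R) :
    ∑ σ : Equiv.Perm (Fin n),
        (1 + s) ^ des n (permWord n σ) * (1 + t) ^ #(ascSetBy ρ n (permWord n σ⁻¹)) =
      ∑ᶠ p ∈ lexBurPairs ρ n, s ^ (n - wmax n p.1) * t ^ (n - wmax n p.2) := by
  calc ∑ σ : Equiv.Perm (Fin n),
        (1 + s) ^ des n (permWord n σ) * (1 + t) ^ #(ascSetBy ρ n (permWord n σ⁻¹))
      = ∑ x ∈ descentTriples ρ n, s ^ #x.2.1 * t ^ #x.2.2 := by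
        rw [descentTriples, sum_sigma]
        refine sum_congr rfl fun σ _ => ?_
        rw [sum_product, des, one_add_pow_card, one_add_pow_card, sum_mul_sum]
    _ = ∑ᶠ p ∈ lexBurPairs ρ n, s ^ (n - wmax n p.1) * t ^ (n - wmax n p.2) := by
      rw [← finsum_mem_coe_finset]
      refine finsum_mem_eq_of_bijOn _ (bijOn_descentTriples hρ) fun x hx => ?_
      obtain ⟨hS, hT⟩ := subset_Icc_of_mem_descentTriples hx
      simp only [sub_wmax_collapsePerm hS, sub_wmax_collapsePerm hT]

end Bijection

theorem lexDesSet_toDual (n : ℕ) (v : ℕ → ℕ) : lexDesSet OrderDual.toDual n v = desSet n v :=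
  filter_congr fun i _ => by
    simp only [Prod.Lex.toLex_lt_toLex, OrderDual.toDual_lt_toDual]; omega

theorem lexDesSet_id (n : ℕ) (v : ℕ → ℕ) : lexDesSet id n v = sdesSet n v :=
  filter_congr fun i _ => by simp only [Prod.Lex.toLex_lt_toLex, id]; omega

theorem lexBurPairs_toDual (n : ℕ) : lexBurPairs OrderDual.toDual n = BurPairs n := by
  simp only [lexBurPairs, lexDesSet_toDual, BurPairs]

theorem lexBurPairs_id (n : ℕ) : lexBurPairs id n = BBurPairs n := by
  simp only [lexBurPairs, lexDesSet_id, BBurPairs]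

theorem ascSetBy_toDual (n : ℕ) (w : ℕ → ℕ) : ascSetBy OrderDual.toDual n w = sdesSet n w :=
  filter_congr fun _ _ => OrderDual.toDual_lt_toDual

theorem ascSetBy_id (n : ℕ) (w : ℕ → ℕ) : ascSetBy id n w = sascSet n w := rfl

/-- Theorem 6.5: `A_n(1+s,1+t) = B_n(s,t)` and `A∘_n(1+s,1+t) = B∘_n(s,t)`
in `ℤ[s,t]`. -/
theorem stmt13 (n : ℕ) :
    ((∑ σ : Equiv.Perm (Fin n),
        (1 + MvPolynomial.X 0 : MvPolynomial (Fin 2) ℤ) ^ des n (permWord n σ) *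
          (1 + MvPolynomial.X 1) ^ des n (permWord n σ⁻¹))
      = ∑ᶠ p ∈ BurPairs n,
          (MvPolynomial.X 0 : MvPolynomial (Fin 2) ℤ) ^ (n - wmax n p.1) *
            MvPolynomial.X 1 ^ (n - wmax n p.2)) ∧
    ((∑ σ : Equiv.Perm (Fin n),
        (1 + MvPolynomial.X 0 : MvPolynomial (Fin 2) ℤ) ^ des n (permWord n σ) *
          (1 + MvPolynomial.X 1) ^ asc n (permWord n σ⁻¹))
      = ∑ᶠ p ∈ BBurPairs n,
          (MvPolynomial.X 0 : MvPolynomial (Fin 2) ℤ) ^ (n - wmax n p.1) *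
            MvPolynomial.X 1 ^ (n - wmax n p.2)) := by
  constructor
  · have h := sum_one_add_pow_eq_finsum_lexBurPairs (n := n) OrderDual.toDual.injective
      (MvPolynomial.X 0 : MvPolynomial (Fin 2) ℤ) (MvPolynomial.X 1)
    simp only [ascSetBy_toDual, ← desSet_permWord, lexBurPairs_toDual] at h
    exact h
  · have h := sum_one_add_pow_eq_finsum_lexBurPairs (n := n) (ρ := id) Function.injective_id
      (MvPolynomial.X 0 : MvPolynomial (Fin 2) ℤ) (MvPolynomial.X 1)
    simp only [ascSetBy_id, ← ascSet_permWord, lexBurPairs_id] at h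
    exact h

end CayPaper
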